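/- Bounded-prefix determination of outcomes: Let M be an RB-CGS#, A a nonempty coalition, b a resource bound, and k = min_{a∈A} b_{a,1}. If two strategies F_A and F'_A agree on every nonempty state sequence of length at most k, then for every state s, out(s, F_A, b) = out(s, F'_A, b). -/

import Mathlib

/-- A resource-bounded concurrent game structure with a diminishing resource (RB-CGS#). -/
structure RBCGS (Agt S Act Res : Type) where
  /-- available actions for each agent in each state -/
  d : S → Agt → Set Act
  d_ne : ∀ s a, (d s a).Nonempty
  /-- cost function (negative = consumption, positive = production) -/
  cost : S → Act → Res → ℤ
  /-- the distinguished diminishing resource (the "first" resource) -/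
  res1 : Res
  /-- every available action consumes at least one unit of the diminishing resource -/
  cost_first : ∀ s (a : Agt) (α : Act), α ∈ d s a → cost s α res1 ≤ -1
  /-- partial transition function on joint actions -/
  tr : S → (Agt → Act) → Option S

namespace RBCGS

variable {Agt S Act Res : Type}

/-- consumption of resource ρ by action α at state s : `|min(0, c(s,α))|`. -/
def consR (M : RBCGS Agt S Act Res) (s : S) (α : Act) (ρ : Res) : ℕ :=
  (min 0 (M.cost s α ρ)).natAbs

/-- production of resource ρ by action α at state s : `max(0, c(s,α))`. -/
def prodR (M : RBCGS Agt S Act Res) (s : S) (α : Act) (ρ : Res) : ℕ :=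
  (max 0 (M.cost s α ρ)).toNat

/-- σ is a (projection of a) joint action for coalition A at state s. -/
def JointAt (M : RBCGS Agt S Act Res) (A : Set Agt) (s : S) (σ : Agt → Act) : Prop :=
  ∀ a ∈ A, σ a ∈ M.d s a

/-- outcomes of a joint action of coalition A at state s. -/
def outA (M : RBCGS Agt S Act Res) (A : Set Agt) (s : S) (σA : Agt → Act) : Set S :=
  { s' | ∃ σ : Agt → Act, (∀ a, σ a ∈ M.d s a) ∧ (∀ a ∈ A, σ a = σA a) ∧
    M.tr s σ = some s' }

variable [Inhabited S]

/-- F is a strategy for coalition A : on every nonempty history it prescribes a joint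
action available to A at the last state of the history. -/
def Strategy (M : RBCGS Agt S Act Res) (A : Set Agt) (F : List S → Agt → Act) : Prop :=
  ∀ l : List S, l ≠ [] → M.JointAt A (l.getD (l.length - 1) default) (F l)

/-- l is a (finite, nonempty) computation starting at s consistent with strategy F
(the computation `λ[1..k]` is represented 0-based as `l[0..k-1]`). -/
def ConsistentFrom (M : RBCGS Agt S Act Res) (A : Set Agt) (F : List S → Agt → Act)
    (s : S) (l : List S) : Prop :=
  l ≠ [] ∧ l.getD 0 default = s ∧
    ∀ i, i + 1 < l.length →
      l.getD (i + 1) default ∈ M.outA A (l.getD i default) (F (l.take (i + 1)))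

/-- `eAvail M F b l i a ρ` is the amount `e_a(λ[i+1])` of resource ρ available to a
after i steps of l under strategy F with initial bound b. -/
def eAvail (M : RBCGS Agt S Act Res) (F : List S → Agt → Act)
    (b : Agt → Res → ℕ) (l : List S) : ℕ → Agt → Res → ℤ
  | 0 => fun a ρ => (b a ρ : ℤ)
  | i + 1 => fun a ρ =>
      eAvail M F b l i a ρ
        - (M.consR (l.getD i default) (F (l.take (i + 1)) a) ρ : ℤ)
        + (M.prodR (l.getD i default) (F (l.take (i + 1)) a) ρ : ℤ)

/-- l is b-consistent with strategy F for coalition A. -/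
def BConsistent (M : RBCGS Agt S Act Res) (A : Set Agt) (F : List S → Agt → Act)
    (b : Agt → Res → ℕ) (l : List S) : Prop :=
  ∀ a ∈ A, ∀ i, i + 1 < l.length → ∀ ρ,
    (M.consR (l.getD i default) (F (l.take (i + 1)) a) ρ : ℤ) ≤ M.eAvail F b l i a ρ

/-- l is a b-maximal computation from s consistent with F. -/
def BMaximal (M : RBCGS Agt S Act Res) (A : Set Agt) (F : List S → Agt → Act)
    (b : Agt → Res → ℕ) (s : S) (l : List S) : Prop :=
  M.ConsistentFrom A F s l ∧ M.BConsistent A F b l ∧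
    ¬ ∃ l' : List S, l <+: l' ∧ l.length < l'.length ∧
        M.ConsistentFrom A F s l' ∧ M.BConsistent A F b l'

/-- `out(s, F_A, b)` : the set of b-maximal computations from s consistent with F. -/
def outSet (M : RBCGS Agt S Act Res) (A : Set Agt) (F : List S → Agt → Act)
    (b : Agt → Res → ℕ) (s : S) : Set (List S) :=
  { l | M.BMaximal A F b s l }

end RBCGS

/-! Along a consistent computation the members of `A` only play available actions (an unavailable
one has no outcome), and every available action consumes at least one unit of the diminishing
resource and produces none of it. So along a b-consistent computation the amount of it held by
`a ∈ A` drops by at least one per step; hence such a computation has at most `b a res1` steps. Every decision taken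
along it is therefore made on a history of length at most `k`, where the two strategies agree. As
consistency and b-consistency depend only on these decisions, both strategies have the same
b-consistent computations, hence the same b-maximal ones. -/

namespace RBCGS

variable {Agt S Act Res : Type} {M : RBCGS Agt S Act Res} {A : Set Agt}

theorem mem_d_of_mem_outA {s s' : S} {σA : Agt → Act} (h : s' ∈ M.outA A s σA) {a : Agt}
    (ha : a ∈ A) : σA a ∈ M.d s a := by
  obtain ⟨σ, hσ, hσA, -⟩ := h
  exact hσA a ha ▸ hσ a

theorem outA_congr {s : S} {σA σA' : Agt → Act} (h : ∀ a ∈ A, σA a = σA' a) :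
    M.outA A s σA = M.outA A s σA' := by
  ext s'
  refine exists_congr fun σ => and_congr_right fun _ => and_congr_left fun _ => ?_
  exact forall₂_congr fun a ha => by rw [h a ha]

theorem one_le_consR_res1 {s : S} {a : Agt} {α : Act} (h : α ∈ M.d s a) :
    1 ≤ M.consR s α M.res1 := by
  have := M.cost_first s a α h
  unfold consR
  omega

theorem prodR_res1_eq_zero {s : S} {a : Agt} {α : Act} (h : α ∈ M.d s a) :
    M.prodR s α M.res1 = 0 := by
  have := M.cost_first s a α h
  unfold prodR
  omega

variable [Inhabited S] {F F' : List S → Agt → Act} {b : Agt → Res → ℕ} {s : S} {l : List S}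

def AgreeAlong (A : Set Agt) (F F' : List S → Agt → Act) (l : List S) : Prop :=
  ∀ a ∈ A, ∀ i, i + 1 < l.length → F (l.take (i + 1)) a = F' (l.take (i + 1)) a

theorem ConsistentFrom.action_mem (h : M.ConsistentFrom A F s l) {i : ℕ}
    (hi : i + 1 < l.length) {a : Agt} (ha : a ∈ A) :
    F (l.take (i + 1)) a ∈ M.d (l.getD i default) a :=
  mem_d_of_mem_outA (h.2.2 i hi) ha

theorem ConsistentFrom.eAvail_res1_le (h : M.ConsistentFrom A F s l) {a : Agt} (ha : a ∈ A) :
    ∀ i < l.length, M.eAvail F b l i a M.res1 ≤ (b a M.res1 : ℤ) - i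
  | 0, _ => by simp [eAvail]
  | i + 1, hi => by
    have hmem := h.action_mem hi ha
    have hle := h.eAvail_res1_le ha i (by omega)
    have hcons := one_le_consR_res1 hmem
    simp only [eAvail, prodR_res1_eq_zero hmem]
    push_cast
    omega

theorem length_sub_one_le_of_bConsistent (hCF : M.ConsistentFrom A F s l)
    (hBC : M.BConsistent A F b l) {a : Agt} (ha : a ∈ A) : l.length - 1 ≤ b a M.res1 := by
  obtain hl | hl := Nat.lt_or_ge l.length 2
  · omega
  have hi : l.length - 2 + 1 < l.length := by omega
  have hcons := one_le_consR_res1 (hCF.action_mem hi ha)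
  have hle := hCF.eAvail_res1_le (b := b) ha (l.length - 2) (by omega)
  have := hBC a ha (l.length - 2) hi M.res1
  omega

theorem agreeAlong_of_bConsistent
    (hagree : ∀ l : List S, l ≠ [] →
      l.length ≤ sInf ((fun a => b a M.res1) '' A) → F l = F' l)
    (hCF : M.ConsistentFrom A F s l) (hBC : M.BConsistent A F b l) : AgreeAlong A F F' l := by
  intro a ha i hi
  have hk : l.length - 1 ≤ sInf ((fun a => b a M.res1) '' A) :=
    le_csInf ⟨_, a, ha, rfl⟩ fun _ ⟨a', ha', hb⟩ =>
      hb ▸ length_sub_one_le_of_bConsistent hCF hBC ha'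
  rw [hagree _ (List.ne_nil_of_length_pos (by simp; omega)) (by simp; omega)]

theorem eAvail_congr {a : Agt} {i : ℕ}
    (h : ∀ j < i, F (l.take (j + 1)) a = F' (l.take (j + 1)) a) (ρ : Res) :
    M.eAvail F b l i a ρ = M.eAvail F' b l i a ρ := by
  induction i with
  | zero => rfl
  | succ i ih =>
    simp only [eAvail, ih fun j hj => h j (by omega), h i (by omega)]

theorem AgreeAlong.consistentFrom (h : AgreeAlong A F F' l) (hCF : M.ConsistentFrom A F s l) :
    M.ConsistentFrom A F' s l := by
  refine ⟨hCF.1, hCF.2.1, fun i hi => ?_⟩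
  rw [← outA_congr fun a ha => h a ha i hi]
  exact hCF.2.2 i hi

theorem AgreeAlong.bConsistent (h : AgreeAlong A F F' l) (hBC : M.BConsistent A F b l) :
    M.BConsistent A F' b l := by
  intro a ha i hi ρ
  rw [← h a ha i hi, ← eAvail_congr fun j hj => h a ha j (by omega)]
  exact hBC a ha i hi ρ

theorem bMaximal_of_bMaximal
    (hagree : ∀ l : List S, l ≠ [] →
      l.length ≤ sInf ((fun a => b a M.res1) '' A) → F l = F' l)
    (h : M.BMaximal A F b s l) : M.BMaximal A F' b s l := by
  obtain ⟨hCF, hBC, hmax⟩ := h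
  have hFF' := agreeAlong_of_bConsistent hagree hCF hBC
  refine ⟨hFF'.consistentFrom hCF, hFF'.bConsistent hBC, ?_⟩
  rintro ⟨l', hpre, hlen, hCF', hBC'⟩
  have hF'F := agreeAlong_of_bConsistent (fun l h₁ h₂ => (hagree l h₁ h₂).symm) hCF' hBC'
  exact hmax ⟨l', hpre, hlen, hF'F.consistentFrom hCF', hF'F.bConsistent hBC'⟩

end RBCGS

theorem outSet_determined_by_bounded_prefix_general {Agt S Act Res : Type} [Inhabited S]
    (M : RBCGS Agt S Act Res) (A : Set Agt)
    (b : Agt → Res → ℕ)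
    (F F' : List S → Agt → Act)
    (hagree : ∀ l : List S, l ≠ [] →
      l.length ≤ sInf ((fun a => b a M.res1) '' A) → F l = F' l) :
    ∀ s : S, M.outSet A F b s = M.outSet A F' b s := fun _ =>
  Set.ext fun _ =>
    ⟨RBCGS.bMaximal_of_bMaximal hagree,
      RBCGS.bMaximal_of_bMaximal fun l h₁ h₂ => (hagree l h₁ h₂).symm⟩

/-- Bounded-prefix determination of outcomes: if two strategies agree on all
nonempty state sequences of length at most `k = min_{a∈A} b_{a,1}`, they have the same
sets of b-maximal outcomes from every state. -/
theorem outSet_determined_by_bounded_prefix {Agt S Act Res : Type} [Inhabited S]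
    (M : RBCGS Agt S Act Res) (A : Set Agt) (hA : A.Nonempty)
    (b : Agt → Res → ℕ)
    (F F' : List S → Agt → Act) (hF : M.Strategy A F) (hF' : M.Strategy A F')
    (hagree : ∀ l : List S, l ≠ [] →
      l.length ≤ sInf ((fun a => b a M.res1) '' A) → F l = F' l) :
    ∀ s : S, M.outSet A F b s = M.outSet A F' b s :=
  outSet_determined_by_bounded_prefix_general M A b F F' hagree
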